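/- Let π be an unsigned permutation. If an odd cycle C = (o_1, …, o_m) of the cycle graph G(π) contains a valid oriented triple (o_i, o_j, o_k), with positions i < j < k and o_i > o_k > o_j, then C contains a valid oriented triple (o_{i'}, o_{j'}, o_{k'}), with positions i' < j' < k', such that i' ∈ {1,2} or k' = j' + 1. -/

import Mathlib

/-- Position map of the transposition τ(a,b,c): a rotation of the interval [a, c). -/
def rotFun (a b c p : ℕ) : ℕ :=
  if a ≤ p ∧ p < a + (c - b) then p + (b - a)
  else if a + (c - b) ≤ p ∧ p < c then p - (c - b)
  else p

/-- The permutation of positions performed by the transposition τ(a,b,c). -/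
def rotEquiv (a b c : ℕ) : Equiv.Perm ℕ :=
  if h : a ≤ b ∧ b ≤ c then
    { toFun := rotFun a b c
      invFun := rotFun a (a + c - b) c
      left_inv := by
        intro p
        unfold rotFun
        split_ifs <;> omega
      right_inv := by
        intro p
        unfold rotFun
        split_ifs <;> omega }
  else Equiv.refl ℕ

/-- `π` is (the extended version of) an unsigned permutation of size `n`:
a bijection of the positions `{0, …, n+1}` onto the values `{0, …, n+1}` fixing
`0` and `n+1` (encoded as a permutation of `ℕ` that is the identity beyond `n+1`). -/
def IsExtPerm (n : ℕ) (π : Equiv.Perm ℕ) : Prop :=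
  π 0 = 0 ∧ π (n + 1) = n + 1 ∧ ∀ x : ℕ, n + 1 < x → π x = x

/-- The permutation obtained from `π` by applying the transposition τ(a,b,c),
which exchanges the adjacent segments (π_a … π_{b-1}) and (π_b … π_{c-1}). -/
def applyTransp (π : Equiv.Perm ℕ) (a b c : ℕ) : Equiv.Perm ℕ :=
  (rotEquiv a b c).trans π

/-- Successor along an alternating cycle of the cycle graph `G(π)`: from the source
edge `e_i = (−π_i, +π_{i−1})` we traverse the target edge incident to `+π_{i−1}`,
namely `e'_{π_{i−1}+1} = (−(π_{i−1}+1), +π_{i−1})`, and arrive at the source edge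
whose right endpoint is `−(π_{i−1}+1)`, i.e. the one with index `π⁻¹(π_{i−1}+1)`. -/
def cgNext (π : Equiv.Perm ℕ) (i : ℕ) : ℕ :=
  π.symm (π (i - 1) + 1)

/-- The orbit of source-edge index `i` under `f` within `{1, …, n+1}`:
the set of source edges of the alternating cycle of `G(π)` through `e_i`. -/
def orbitOf (f : ℕ → ℕ) (n i : ℕ) : Finset ℕ :=
  (Finset.range (n + 2)).image (fun k => f^[k] i) ∩ Finset.Icc 1 (n + 1)

/-- The number of odd orbits of `f` on `{1, …, n+1}` (each orbit counted at its
minimal representative). -/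
def coddAux (f : ℕ → ℕ) (n : ℕ) : ℕ :=
  ((Finset.Icc 1 (n + 1)).filter
    (fun i => (∀ j ∈ orbitOf f n i, i ≤ j) ∧ (orbitOf f n i).card % 2 = 1)).card

/-- `c_odd(π)`: the number of odd alternating cycles of the cycle graph `G(π)`. -/
def codd (n : ℕ) (π : Equiv.Perm ℕ) : ℕ := coddAux (cgNext π) n

/-- The transposition τ(a,b,c) (with `1 ≤ a < b < c ≤ n+1`) is a 2-transposition for `π`:
it increases the number of odd cycles of the cycle graph by two. -/
def IsTwoTransposition (n : ℕ) (π : Equiv.Perm ℕ) (a b c : ℕ) : Prop :=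
  1 ≤ a ∧ a < b ∧ b < c ∧ c ≤ n + 1 ∧
  codd n (applyTransp π a b c) = codd n π + 2

/-- `(x, y, z)` (the indices of three source edges, read in cycle order) is a valid
oriented triple: it is an oriented triple, and the transposition acting on these three
source edges (i.e. on their indices sorted increasingly) is a 2-transposition. -/
def ValidOrientedTriple (n : ℕ) (π : Equiv.Perm ℕ) (x y z : ℕ) : Prop :=
  (x > z ∧ z > y ∧ IsTwoTransposition n π y z x) ∨
  (y > x ∧ x > z ∧ IsTwoTransposition n π z x y) ∨
  (z > y ∧ y > x ∧ IsTwoTransposition n π x y z)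

/-- The transposition acting on the three (distinct) source edges `x, y, z`
is a 2-transposition for `π`. -/
def IsTwoTranspositionOn (n : ℕ) (π : Equiv.Perm ℕ) (x y z : ℕ) : Prop :=
  ∃ a b c : ℕ, a < b ∧ b < c ∧ ({a, b, c} : Set ℕ) = {x, y, z} ∧
    IsTwoTransposition n π a b c

/-- `o 1, …, o m` is (the listing of the source-edge indices of) an `m`-cycle of the
cycle graph `G(π)`: the listing follows the traversal of the cycle starting from its
rightmost vertex along the incident source edge, so consecutive listed edges satisfy
`cgNext` and the first listed index is the largest one. -/
def IsCycleOf (n : ℕ) (π : Equiv.Perm ℕ) (m : ℕ) (o : ℕ → ℕ) : Prop :=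
  0 < m ∧
  (∀ t : ℕ, 1 ≤ t → t ≤ m → 1 ≤ o t ∧ o t ≤ n + 1) ∧
  (∀ s t : ℕ, 1 ≤ s → s ≤ m → 1 ≤ t → t ≤ m → o s = o t → s = t) ∧
  (∀ t : ℕ, 1 ≤ t → t ≤ m → cgNext π (o t) = o (t % m + 1)) ∧
  (∀ t : ℕ, 2 ≤ t → t ≤ m → o t < o 1)

/-- The cycle `C = (o 1, …, o m)` is oriented: its listing is not strictly decreasing. -/
def OrientedCycle (m : ℕ) (o : ℕ → ℕ) : Prop :=
  ¬ (∀ t : ℕ, 1 ≤ t → t + 1 ≤ m → o (t + 1) < o t)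

/-!
Write `a = o_q < b = o_r < c = o_p` for an oriented triple at positions `p < q < r` of a cycle
`C` of length `m`. Up to conjugation by a rotation of the positions, applying `τ(a, b, c)`
replaces the successor map of `G(π)` by its composite with the 3-cycle `a ↦ c ↦ b ↦ a`. This
closes the arcs of `C` starting at positions `p`, `q`, `r` into three cycles, of lengths
`q - p`, `r - q` and `m - r + p`, and leaves every other cycle alone. For odd `m` the
transposition is thus a 2-transposition exactly when `q - p` and `r - q` are odd. From a valid
triple `(i, j, k)` with `i ≥ 3` and `k ≥ j + 2`, this parity criterion and the maximality of
`o_1` produce one of the valid triples `(1, j, k)`, `(2, j, k)`, `(i, k - 1, k)` or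
`(1, 2, k - 1)`.
-/

open Function

section Orbits

variable {θ : ℕ → ℕ} {n x y : ℕ}

lemma orbitOf_subset_Icc : orbitOf θ n x ⊆ Finset.Icc 1 (n + 1) :=
  Finset.inter_subset_right

lemma mem_orbitOf_self (hx : x ∈ Set.Icc 1 (n + 1)) : x ∈ orbitOf θ n x :=
  Finset.mem_inter.2 ⟨Finset.mem_image.2 ⟨0, by simp, rfl⟩, by simpa using hx⟩

lemma exists_isPeriodicPt_of_bijOn (hθ : Set.BijOn θ (Set.Icc 1 (n + 1)) (Set.Icc 1 (n + 1)))
    (hx : x ∈ Set.Icc 1 (n + 1)) : ∃ d, 0 < d ∧ d ≤ n + 1 ∧ IsPeriodicPt θ d x := by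
  set g := hθ.mapsTo.restrict
  have hg : Injective g := hθ.mapsTo.restrict_inj.2 hθ.injOn
  have hper := hg.mem_periodicPts ⟨x, hx⟩
  refine ⟨minimalPeriod g ⟨x, hx⟩, minimalPeriod_pos_of_mem_periodicPts hper, ?_,
    (isPeriodicPt_minimalPeriod g _).map (fun _ => rfl : Semiconj Subtype.val g θ)⟩
  simpa using minimalPeriod_le_card (f := g) (x := ⟨x, hx⟩)

lemma mem_orbitOf_iff (hθ : Set.BijOn θ (Set.Icc 1 (n + 1)) (Set.Icc 1 (n + 1)))
    (hx : x ∈ Set.Icc 1 (n + 1)) : y ∈ orbitOf θ n x ↔ ∃ k, θ^[k] x = y := by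
  obtain ⟨d, hd, hdn, hper⟩ := exists_isPeriodicPt_of_bijOn hθ hx
  simp only [orbitOf, Finset.mem_inter, Finset.mem_image, Finset.mem_range]
  constructor
  · rintro ⟨⟨k, -, rfl⟩, -⟩
    exact ⟨k, rfl⟩
  · rintro ⟨k, rfl⟩
    refine ⟨⟨k % d, by have := Nat.mod_lt k hd; omega, hper.iterate_mod_apply k⟩, ?_⟩
    simpa using hθ.mapsTo.iterate k hx

lemma orbitOf_eq_of_mem (hθ : Set.BijOn θ (Set.Icc 1 (n + 1)) (Set.Icc 1 (n + 1)))
    (hx : x ∈ Set.Icc 1 (n + 1)) (hy : y ∈ orbitOf θ n x) : orbitOf θ n y = orbitOf θ n x := by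
  have hyS : y ∈ Set.Icc 1 (n + 1) := by simpa using orbitOf_subset_Icc hy
  obtain ⟨k, rfl⟩ := (mem_orbitOf_iff hθ hx).1 hy
  obtain ⟨d, hd, -, hper⟩ := exists_isPeriodicPt_of_bijOn hθ hx
  ext z
  rw [mem_orbitOf_iff hθ hyS, mem_orbitOf_iff hθ hx]
  constructor
  · rintro ⟨j, rfl⟩
    exact ⟨j + k, iterate_add_apply θ j k x⟩
  · rintro ⟨j, rfl⟩
    refine ⟨j + (d * k - k), ?_⟩
    have hdk : j + (d * k - k) + k = j + d * k := by
      have : k ≤ d * k := Nat.le_mul_of_pos_left k hd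
      omega
    rw [← iterate_add_apply, hdk, iterate_add_apply, (hper.mul_const k).eq]

lemma orbitOf_comp_eq_of_isFixedPt {f g : ℕ → ℕ}
    (hf : Set.BijOn f (Set.Icc 1 (n + 1)) (Set.Icc 1 (n + 1))) (hx : x ∈ Set.Icc 1 (n + 1))
    (hg : ∀ y ∈ orbitOf f n x, IsFixedPt g y) : orbitOf (fun y => g (f y)) n x = orbitOf f n x := by
  have hiter : ∀ k, (fun y => g (f y))^[k] x = f^[k] x := by
    intro k
    induction k with
    | zero => rfl
    | succ k ih =>
      rw [iterate_succ_apply', iterate_succ_apply', ih]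
      exact hg _ ((mem_orbitOf_iff hf hx).2 ⟨k + 1, iterate_succ_apply' f k x⟩)
  simp only [orbitOf, hiter]

def IsOddOrbitMin (θ : ℕ → ℕ) (n i : ℕ) : Prop :=
  (∀ j ∈ orbitOf θ n i, i ≤ j) ∧ (orbitOf θ n i).card % 2 = 1

instance : DecidablePred (IsOddOrbitMin θ n) := fun _ => by
  unfold IsOddOrbitMin; infer_instance

lemma coddAux_eq_card_filter :
    coddAux θ n = ((Finset.Icc 1 (n + 1)).filter (IsOddOrbitMin θ n)).card := rfl

lemma card_filter_isOddOrbitMin {A : Finset ℕ} (hA : A.Nonempty)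
    (horb : ∀ x ∈ A, orbitOf θ n x = A) : (A.filter (IsOddOrbitMin θ n)).card = A.card % 2 := by
  rcases Nat.mod_two_eq_zero_or_one A.card with hev | hodd
  · rw [hev, Finset.card_eq_zero, Finset.filter_eq_empty_iff]
    rintro x hx ⟨-, hx_odd⟩
    rw [horb x hx] at hx_odd
    omega
  · rw [hodd, Finset.card_eq_one]
    refine ⟨A.min' hA, Finset.ext fun x => ?_⟩
    simp only [Finset.mem_filter, Finset.mem_singleton, IsOddOrbitMin]
    constructor
    · rintro ⟨hx, hmin, -⟩
      exact le_antisymm (hmin _ (horb x hx ▸ A.min'_mem hA)) (A.min'_le x hx)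
    · rintro rfl
      rw [horb _ (A.min'_mem hA)]
      exact ⟨A.min'_mem hA, fun j hj => A.min'_le j hj, hodd⟩

-- Unlike `coddAux` itself, this count of odd orbits ignores the order of `ℕ`, so it survives
-- relabelling the points.
lemma coddAux_eq_card_image (hθ : Set.BijOn θ (Set.Icc 1 (n + 1)) (Set.Icc 1 (n + 1))) :
    coddAux θ n = (((Finset.Icc 1 (n + 1)).filter
      (fun x => (orbitOf θ n x).card % 2 = 1)).image (orbitOf θ n)).card := by
  rw [coddAux_eq_card_filter, ← Finset.card_image_of_injOn (f := orbitOf θ n)]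
  · congr 1
    ext O
    simp only [Finset.mem_image, Finset.mem_filter]
    constructor
    · rintro ⟨x, ⟨hx, -, hodd⟩, rfl⟩
      exact ⟨x, ⟨hx, hodd⟩, rfl⟩
    · rintro ⟨x, ⟨hx, hodd⟩, rfl⟩
      have hxS : x ∈ Set.Icc 1 (n + 1) := by simpa using hx
      have hne : (orbitOf θ n x).Nonempty := ⟨x, mem_orbitOf_self hxS⟩
      set z := (orbitOf θ n x).min' hne
      have hz : orbitOf θ n z = orbitOf θ n x :=
        orbitOf_eq_of_mem hθ hxS ((orbitOf θ n x).min'_mem hne)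
      refine ⟨z, ⟨orbitOf_subset_Icc ((orbitOf θ n x).min'_mem hne), ?_, hz ▸ hodd⟩, hz⟩
      exact fun j hj => (orbitOf θ n x).min'_le j (hz ▸ hj)
  · intro x hx y hy hxy
    simp only [Finset.coe_filter, Set.mem_ofPred_eq, IsOddOrbitMin] at hx hy
    have hxS : x ∈ Set.Icc 1 (n + 1) := by simpa using hx.1
    have hyS : y ∈ Set.Icc 1 (n + 1) := by simpa using hy.1
    exact le_antisymm (hx.2.1 y (hxy ▸ mem_orbitOf_self hyS))
      (hy.2.1 x (hxy ▸ mem_orbitOf_self hxS))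

lemma orbitOf_conj (u : ℕ → ℕ) {w : Equiv.Perm ℕ}
    (hw : ∀ x, w x ∈ Set.Icc 1 (n + 1) ↔ x ∈ Set.Icc 1 (n + 1)) (x : ℕ) :
    orbitOf (fun x => w.symm (u (w x))) n x = (orbitOf u n (w x)).image w.symm := by
  have hws : ∀ y, w.symm y ∈ Set.Icc 1 (n + 1) ↔ y ∈ Set.Icc 1 (n + 1) := fun y => by
    simpa using (hw (w.symm y)).symm
  have hiter : ∀ k x, (fun x => w.symm (u (w x)))^[k] x = w.symm (u^[k] (w x)) := by
    intro k
    induction k with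
    | zero => simp
    | succ k ih => intro x; simp only [iterate_succ_apply', ih, Equiv.apply_symm_apply]
  ext y
  simp only [orbitOf, Finset.mem_inter, Finset.mem_image, Finset.mem_range, hiter]
  constructor
  · rintro ⟨⟨k, hk, rfl⟩, hy⟩
    exact ⟨_, ⟨⟨k, hk, rfl⟩, by simpa using (hws _).1 (by simpa using hy)⟩, rfl⟩
  · rintro ⟨_, ⟨⟨k, hk, rfl⟩, hy⟩, rfl⟩
    exact ⟨⟨k, hk, rfl⟩, by simpa using (hws _).2 (by simpa using hy)⟩

lemma coddAux_conj {u : ℕ → ℕ} (hu : Set.BijOn u (Set.Icc 1 (n + 1)) (Set.Icc 1 (n + 1)))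
    (w : Equiv.Perm ℕ) (hw : ∀ x, w x ∈ Set.Icc 1 (n + 1) ↔ x ∈ Set.Icc 1 (n + 1)) :
    coddAux (fun x => w.symm (u (w x))) n = coddAux u n := by
  set g := fun x => w.symm (u (w x))
  have hws : ∀ y, w.symm y ∈ Set.Icc 1 (n + 1) ↔ y ∈ Set.Icc 1 (n + 1) := fun y => by
    simpa using (hw (w.symm y)).symm
  have hwS : Set.BijOn w (Set.Icc 1 (n + 1)) (Set.Icc 1 (n + 1)) :=
    ⟨fun x hx => (hw x).2 hx, w.injective.injOn, fun y hy => ⟨w.symm y, (hws y).2 hy, by simp⟩⟩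
  have hwsS : Set.BijOn w.symm (Set.Icc 1 (n + 1)) (Set.Icc 1 (n + 1)) :=
    ⟨fun y hy => (hws y).2 hy, w.symm.injective.injOn, fun x hx => ⟨w x, (hw x).2 hx, by simp⟩⟩
  have hg : Set.BijOn g (Set.Icc 1 (n + 1)) (Set.Icc 1 (n + 1)) := hwsS.comp (hu.comp hwS)
  have hset : ((Finset.Icc 1 (n + 1)).filter (fun x => (orbitOf g n x).card % 2 = 1)).image
      (orbitOf g n) = (((Finset.Icc 1 (n + 1)).filter (fun x => (orbitOf u n x).card % 2 = 1)).image
        (orbitOf u n)).image (Finset.image w.symm) := by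
    ext O
    simp only [Finset.mem_image, Finset.mem_filter, g, orbitOf_conj u hw,
      Finset.card_image_of_injective _ w.symm.injective]
    constructor
    · rintro ⟨x, ⟨hx, hodd⟩, rfl⟩
      exact ⟨_, ⟨w x, ⟨by simpa using (hw x).2 (by simpa using hx), hodd⟩, rfl⟩, rfl⟩
    · rintro ⟨_, ⟨y, ⟨hy, hodd⟩, rfl⟩, rfl⟩
      refine ⟨w.symm y, ⟨by simpa using (hws y).2 (by simpa using hy), by simpa using hodd⟩, ?_⟩
      simp
  rw [coddAux_eq_card_image hg, coddAux_eq_card_image hu, hset,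
    Finset.card_image_of_injective _ (Finset.image_injective w.symm.injective)]

end Orbits

structure IsCycleListing (f : ℕ → ℕ) (n : ℕ) (v : ℕ → ℕ) (s e : ℕ) : Prop where
  lt : s < e
  mem : ∀ t ∈ Set.Ico s e, v t ∈ Set.Icc 1 (n + 1)
  injOn : Set.InjOn v (Set.Ico s e)
  step : ∀ t, s ≤ t → t + 1 < e → f (v t) = v (t + 1)
  close : f (v (e - 1)) = v s

namespace IsCycleListing

variable {f : ℕ → ℕ} {n : ℕ} {v : ℕ → ℕ} {s e : ℕ}

lemma iterate_eq (h : IsCycleListing f n v s e) {k : ℕ} (hk : k < e - s) :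
    f^[k] (v s) = v (s + k) := by
  induction k with
  | zero => rfl
  | succ k ih => rw [iterate_succ_apply', ih (by omega), h.step _ le_self_add (by omega)]; rfl

lemma isPeriodicPt (h : IsCycleListing f n v s e) : IsPeriodicPt f (e - s) (v s) := by
  have hlast := h.iterate_eq (k := e - s - 1) (by have := h.lt; omega)
  show f^[e - s] (v s) = v s
  rw [show e - s = e - s - 1 + 1 by have := h.lt; omega, iterate_succ_apply', hlast,
    show s + (e - s - 1) = e - 1 by have := h.lt; omega, h.close]

lemma orbitOf_eq (hf : Set.BijOn f (Set.Icc 1 (n + 1)) (Set.Icc 1 (n + 1)))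
    (h : IsCycleListing f n v s e) : orbitOf f n (v s) = (Finset.Ico s e).image v := by
  have hlt := h.lt
  ext y
  rw [mem_orbitOf_iff hf (h.mem s ⟨le_rfl, hlt⟩), Finset.mem_image]
  constructor
  · rintro ⟨k, rfl⟩
    have hmod := Nat.mod_lt k (show 0 < e - s by omega)
    refine ⟨s + k % (e - s), Finset.mem_Ico.2 ⟨by omega, by omega⟩, ?_⟩
    rw [← h.isPeriodicPt.iterate_mod_apply, h.iterate_eq hmod]
  · rintro ⟨t, ht, rfl⟩
    rw [Finset.mem_Ico] at ht
    exact ⟨t - s, by rw [h.iterate_eq (by omega)]; congr 1; omega⟩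

lemma card_image (h : IsCycleListing f n v s e) : ((Finset.Ico s e).image v).card = e - s := by
  rw [Finset.card_image_of_injOn (by simpa using h.injOn), Nat.card_Ico]

lemma image_subset_Icc (h : IsCycleListing f n v s e) :
    (Finset.Ico s e).image v ⊆ Finset.Icc 1 (n + 1) := fun y hy => by
  obtain ⟨t, ht, rfl⟩ := Finset.mem_image.1 hy
  simpa using h.mem t (by simpa using ht)

lemma orbitOf_eq_of_mem_image (hf : Set.BijOn f (Set.Icc 1 (n + 1)) (Set.Icc 1 (n + 1)))
    (h : IsCycleListing f n v s e) {y : ℕ} (hy : y ∈ (Finset.Ico s e).image v) :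
    orbitOf f n y = (Finset.Ico s e).image v := by
  rw [← h.orbitOf_eq hf] at hy ⊢
  exact orbitOf_eq_of_mem hf (h.mem s ⟨le_rfl, h.lt⟩) hy

lemma card_filter_isOddOrbitMin (hf : Set.BijOn f (Set.Icc 1 (n + 1)) (Set.Icc 1 (n + 1)))
    (h : IsCycleListing f n v s e) :
    (((Finset.Ico s e).image v).filter (IsOddOrbitMin f n)).card = (e - s) % 2 := by
  rw [← h.card_image]
  exact _root_.card_filter_isOddOrbitMin ⟨v s, Finset.mem_image_of_mem v
    (Finset.mem_Ico.2 ⟨le_rfl, h.lt⟩)⟩ fun x hx => h.orbitOf_eq_of_mem_image hf hx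

lemma arc (h : IsCycleListing f n v s e) {g : ℕ → ℕ} {a b : ℕ} (hsa : s ≤ a) (hab : a < b)
    (hbe : b ≤ e) (hfix : ∀ t, a < t → t < b → g (v t) = v t) (hclose : g (f (v (b - 1))) = v a) :
    IsCycleListing (fun x => g (f x)) n v a b where
  lt := hab
  mem t ht := h.mem t ⟨hsa.trans ht.1, ht.2.trans_le hbe⟩
  injOn := h.injOn.mono (Set.Ico_subset_Ico hsa hbe)
  step t hat htb := by
    rw [h.step t (by omega) (by omega), hfix (t + 1) (by omega) htb]
  close := hclose

end IsCycleListing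

lemma card_filter_image_Ico_add {v : ℕ → ℕ} (p : ℕ → Prop) [DecidablePred p] {a b c : ℕ}
    (hab : a ≤ b) (hbc : b ≤ c) (hv : Set.InjOn v (Set.Ico a c)) :
    (((Finset.Ico a b).image v).filter p).card + (((Finset.Ico b c).image v).filter p).card =
      (((Finset.Ico a c).image v).filter p).card := by
  rw [← Finset.Ico_union_Ico_eq_Ico hab hbc, Finset.image_union, Finset.filter_union,
    Finset.card_union_of_disjoint (Finset.disjoint_filter_filter _)]
  simp only [Finset.disjoint_left, Finset.mem_image, Finset.mem_Ico]
  rintro _ ⟨t, ht, rfl⟩ ⟨t', ht', heq⟩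
  have := hv ⟨by omega, by omega⟩ ⟨by omega, by omega⟩ heq
  omega

def threeCycle (a b c x : ℕ) : ℕ :=
  if x = a then c else if x = b then a else if x = c then b else x

section ThreeCycle

variable {a b c : ℕ}

lemma threeCycle_apply_left : threeCycle a b c a = c := if_pos rfl

lemma threeCycle_apply_mid (hab : a ≠ b) : threeCycle a b c b = a := by
  simp [threeCycle, hab.symm]

lemma threeCycle_apply_right (hac : a ≠ c) (hbc : b ≠ c) : threeCycle a b c c = b := by
  simp [threeCycle, hac.symm, hbc.symm]

lemma threeCycle_apply_of_ne {x : ℕ} (ha : x ≠ a) (hb : x ≠ b) (hc : x ≠ c) :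
    threeCycle a b c x = x := by
  simp [threeCycle, ha, hb, hc]

lemma threeCycle_bijOn {n : ℕ} (ha : a ∈ Set.Icc 1 (n + 1)) (hb : b ∈ Set.Icc 1 (n + 1))
    (hc : c ∈ Set.Icc 1 (n + 1)) (hac : a ≠ c) (hbc : b ≠ c) :
    Set.BijOn (threeCycle a b c) (Set.Icc 1 (n + 1)) (Set.Icc 1 (n + 1)) := by
  simp only [Set.mem_Icc] at ha hb hc
  have hmaps : Set.MapsTo (threeCycle a b c) (Set.Icc 1 (n + 1)) (Set.Icc 1 (n + 1)) := by
    intro x hx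
    simp only [Set.mem_Icc, threeCycle] at hx ⊢
    split_ifs <;> omega
  refine ((Set.finite_Icc 1 (n + 1)).injOn_iff_bijOn_of_mapsTo hmaps).1 fun x _ y _ h => ?_
  simp only [threeCycle] at h
  split_ifs at h <;> omega

end ThreeCycle

namespace IsExtPerm

variable {n : ℕ} {π : Equiv.Perm ℕ}

lemma apply_le_iff (hπ : IsExtPerm n π) {x : ℕ} : π x ≤ n + 1 ↔ x ≤ n + 1 := by
  constructor
  · intro h
    by_contra hx
    have := hπ.2.2 x (by omega)
    omega
  · intro h
    by_contra hx
    have := π.injective (hπ.2.2 (π x) (by omega))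
    omega

lemma symm_apply_le_iff (hπ : IsExtPerm n π) {y : ℕ} : π.symm y ≤ n + 1 ↔ y ≤ n + 1 := by
  simpa using (hπ.apply_le_iff (x := π.symm y)).symm

lemma cgNext_bijOn (hπ : IsExtPerm n π) :
    Set.BijOn (cgNext π) (Set.Icc 1 (n + 1)) (Set.Icc 1 (n + 1)) := by
  have hmaps : Set.MapsTo (cgNext π) (Set.Icc 1 (n + 1)) (Set.Icc 1 (n + 1)) := by
    intro x hx
    rw [Set.mem_Icc] at hx ⊢
    have hle : π (x - 1) ≤ n + 1 := hπ.apply_le_iff.2 (by omega)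
    have hne : π (x - 1) ≠ n + 1 := fun h => by
      have := π.injective (h.trans hπ.2.1.symm)
      omega
    have hne0 : cgNext π x ≠ 0 := fun h => by
      have := congrArg π h
      simp only [cgNext, Equiv.apply_symm_apply, hπ.1] at this
      omega
    exact ⟨Nat.one_le_iff_ne_zero.2 hne0, hπ.symm_apply_le_iff.2 (by omega)⟩
  refine ((Set.finite_Icc 1 (n + 1)).injOn_iff_bijOn_of_mapsTo hmaps).1 fun x hx y hy h => ?_
  have := π.injective (by simpa [cgNext] using h)
  simp only [Set.mem_Icc] at hx hy
  omega

end IsExtPerm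

section Transposition

variable {n : ℕ} {π : Equiv.Perm ℕ} {a b c : ℕ}

lemma rotEquiv_apply (hab : a ≤ b) (hbc : b ≤ c) (x : ℕ) : rotEquiv a b c x = rotFun a b c x := by
  rw [rotEquiv, dif_pos ⟨hab, hbc⟩]
  rfl

lemma rotEquiv_symm_apply (hab : a ≤ b) (hbc : b ≤ c) (x : ℕ) :
    (rotEquiv a b c).symm x = rotFun a (a + c - b) c x := by
  rw [rotEquiv, dif_pos ⟨hab, hbc⟩]
  rfl

lemma rotEquiv_succ_mem_Icc_iff (ha : 1 ≤ a) (hab : a < b) (hbc : b < c) (hc : c ≤ n + 1)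
    (x : ℕ) : rotEquiv (a + 1) (b + 1) (c + 1) x ∈ Set.Icc 1 (n + 1) ↔ x ∈ Set.Icc 1 (n + 1) := by
  rw [rotEquiv_apply (by omega) (by omega), Set.mem_Icc, Set.mem_Icc, rotFun]
  split_ifs <;> omega

lemma cgNext_applyTransp (ha : 1 ≤ a) (hab : a < b) (hbc : b < c) (x : ℕ) :
    cgNext (applyTransp π a b c) x = (rotEquiv (a + 1) (b + 1) (c + 1)).symm
      (threeCycle a b c (cgNext π (rotEquiv (a + 1) (b + 1) (c + 1) x))) := by
  have hshift : rotEquiv a b c (x - 1) = rotEquiv (a + 1) (b + 1) (c + 1) x - 1 := by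
    rw [rotEquiv_apply (by omega) (by omega), rotEquiv_apply (by omega) (by omega), rotFun,
      rotFun]
    split_ifs <;> omega
  have hthree : ∀ y, rotEquiv (a + 1) (b + 1) (c + 1) ((rotEquiv a b c).symm y) =
      threeCycle a b c y := by
    intro y
    rw [rotEquiv_symm_apply (by omega) (by omega), rotEquiv_apply (by omega) (by omega),
      rotFun, rotFun, threeCycle]
    split_ifs <;> omega
  rw [cgNext, applyTransp, Equiv.trans_apply, Equiv.symm_trans_apply, hshift, ← hthree,
    Equiv.symm_apply_apply, cgNext]

lemma IsExtPerm.codd_applyTransp (hπ : IsExtPerm n π) (ha : 1 ≤ a) (hab : a < b) (hbc : b < c)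
    (hc : c ≤ n + 1) :
    codd n (applyTransp π a b c) = coddAux (fun x => threeCycle a b c (cgNext π x)) n := by
  rw [codd, funext (cgNext_applyTransp ha hab hbc)]
  exact coddAux_conj ((threeCycle_bijOn ⟨ha, by omega⟩ ⟨by omega, by omega⟩ ⟨by omega, hc⟩
    (hab.trans hbc).ne hbc.ne).comp hπ.cgNext_bijOn) _
    (rotEquiv_succ_mem_Icc_iff ha hab hbc hc)

end Transposition

lemma coddAux_comp_add_card_filter {f g : ℕ → ℕ} {n : ℕ} {C : Finset ℕ}
    (hf : Set.BijOn f (Set.Icc 1 (n + 1)) (Set.Icc 1 (n + 1))) (hCS : C ⊆ Finset.Icc 1 (n + 1))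
    (horbC : ∀ y ∈ C, orbitOf f n y = C) (hg : ∀ y ∉ C, g y = y) :
    coddAux (fun x => g (f x)) n + (C.filter (IsOddOrbitMin f n)).card =
      coddAux f n + (C.filter (IsOddOrbitMin (fun x => g (f x)) n)).card := by
  have hoff : ∀ x ∈ Finset.Icc 1 (n + 1) \ C, orbitOf (fun y => g (f y)) n x = orbitOf f n x := by
    intro x hx
    rw [Finset.mem_sdiff, Finset.mem_Icc] at hx
    refine orbitOf_comp_eq_of_isFixedPt hf hx.1 fun y hy => hg y fun hyC => hx.2 ?_
    rw [← horbC y hyC, orbitOf_eq_of_mem hf hx.1 hy]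
    exact mem_orbitOf_self hx.1
  have hsplit : ∀ θ : ℕ → ℕ, coddAux θ n = (C.filter (IsOddOrbitMin θ n)).card +
      ((Finset.Icc 1 (n + 1) \ C).filter (IsOddOrbitMin θ n)).card := fun θ => by
    rw [coddAux_eq_card_filter, ← Finset.card_union_of_disjoint
      (Finset.disjoint_filter_filter Finset.disjoint_sdiff), ← Finset.filter_union,
      Finset.union_sdiff_of_subset hCS]
  have hoff_count : (Finset.Icc 1 (n + 1) \ C).filter (IsOddOrbitMin (fun x => g (f x)) n) =
      (Finset.Icc 1 (n + 1) \ C).filter (IsOddOrbitMin f n) :=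
    Finset.filter_congr fun x hx => by rw [IsOddOrbitMin, IsOddOrbitMin, hoff x hx]
  rw [hsplit, hsplit f, hoff_count]
  ring

namespace IsCycleListing

variable {f v : ℕ → ℕ} {n P Q R E : ℕ}

lemma threeCycle_comp_arcs (hf : Set.BijOn f (Set.Icc 1 (n + 1)) (Set.Icc 1 (n + 1)))
    (h : IsCycleListing f n v P E) (hPQ : P < Q) (hQR : Q < R) (hRE : R < E) :
    let u := fun x => threeCycle (v Q) (v R) (v P) (f x)
    Set.BijOn u (Set.Icc 1 (n + 1)) (Set.Icc 1 (n + 1)) ∧ IsCycleListing u n v P Q ∧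
      IsCycleListing u n v Q R ∧ IsCycleListing u n v R E := by
  set g := threeCycle (v Q) (v R) (v P)
  have hvne : ∀ {s t}, s ∈ Set.Ico P E → t ∈ Set.Ico P E → s ≠ t → v s ≠ v t :=
    fun hs ht hst => h.injOn.ne hs ht hst
  have hP : P ∈ Set.Ico P E := ⟨le_rfl, by omega⟩
  have hQ : Q ∈ Set.Ico P E := ⟨by omega, by omega⟩
  have hR : R ∈ Set.Ico P E := ⟨by omega, by omega⟩
  have hfix : ∀ t, P < t → t < E → t ≠ Q → t ≠ R → g (v t) = v t := fun t hPt htE htQ htR =>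
    threeCycle_apply_of_ne (hvne ⟨hPt.le, htE⟩ hQ htQ) (hvne ⟨hPt.le, htE⟩ hR htR)
      (hvne ⟨hPt.le, htE⟩ hP hPt.ne')
  have hstep : ∀ t, P < t → t < E → f (v (t - 1)) = v t := fun t hPt htE => by
    rw [h.step (t - 1) (by omega) (by omega), Nat.sub_add_cancel (by omega)]
  have hclose₁ : g (f (v (Q - 1))) = v P := by
    rw [hstep Q hPQ (by omega)]
    exact threeCycle_apply_left
  have hclose₂ : g (f (v (R - 1))) = v Q := by
    rw [hstep R (by omega) hRE]
    exact threeCycle_apply_mid (hvne hQ hR hQR.ne)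
  have hclose₃ : g (f (v (E - 1))) = v R := by
    rw [h.close]
    exact threeCycle_apply_right (hvne hQ hP hPQ.ne') (hvne hR hP (by omega))
  refine ⟨(threeCycle_bijOn (h.mem Q hQ) (h.mem R hR) (h.mem P hP) (hvne hQ hP (by omega))
      (hvne hR hP (by omega))).comp hf, ?_, ?_, ?_⟩
  · exact h.arc le_rfl hPQ (by omega)
      (fun t hPt htQ => hfix t hPt (by omega) htQ.ne (by omega)) hclose₁
  · exact h.arc hPQ.le hQR (by omega)
      (fun t hQt htR => hfix t (by omega) (by omega) hQt.ne' htR.ne) hclose₂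
  · exact h.arc (by omega) hRE le_rfl
      (fun t hRt htE => hfix t (by omega) htE (by omega) hRt.ne') hclose₃

lemma card_filter_threeCycle_comp (hf : Set.BijOn f (Set.Icc 1 (n + 1)) (Set.Icc 1 (n + 1)))
    (h : IsCycleListing f n v P E) (hPQ : P < Q) (hQR : Q < R) (hRE : R < E) :
    (((Finset.Ico P E).image v).filter
      (IsOddOrbitMin (fun x => threeCycle (v Q) (v R) (v P) (f x)) n)).card =
      (Q - P) % 2 + (R - Q) % 2 + (E - R) % 2 := by
  obtain ⟨hu, h₁, h₂, h₃⟩ := h.threeCycle_comp_arcs hf hPQ hQR hRE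
  rw [← card_filter_image_Ico_add _ (hPQ.trans hQR).le hRE.le h.injOn,
    ← card_filter_image_Ico_add _ hPQ.le hQR.le (h.injOn.mono (Set.Ico_subset_Ico le_rfl hRE.le)),
    h₁.card_filter_isOddOrbitMin hu, h₂.card_filter_isOddOrbitMin hu,
    h₃.card_filter_isOddOrbitMin hu]

lemma coddAux_threeCycle_comp (hf : Set.BijOn f (Set.Icc 1 (n + 1)) (Set.Icc 1 (n + 1)))
    (h : IsCycleListing f n v P E) (hPQ : P < Q) (hQR : Q < R) (hRE : R < E) :
    coddAux (fun x => threeCycle (v Q) (v R) (v P) (f x)) n + (E - P) % 2 =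
      coddAux f n + ((Q - P) % 2 + (R - Q) % 2 + (E - R) % 2) := by
  have hsupp : ∀ y ∉ (Finset.Ico P E).image v, threeCycle (v Q) (v R) (v P) y = y := by
    intro y hy
    refine threeCycle_apply_of_ne ?_ ?_ ?_ <;> rintro rfl <;>
      exact hy (Finset.mem_image_of_mem v (Finset.mem_Ico.2 ⟨by omega, by omega⟩))
  rw [← h.card_filter_isOddOrbitMin hf, ← h.card_filter_threeCycle_comp hf hPQ hQR hRE]
  exact coddAux_comp_add_card_filter hf h.image_subset_Icc
    (fun y hy => h.orbitOf_eq_of_mem_image hf hy) hsupp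

end IsCycleListing

namespace IsCycleOf

variable {n : ℕ} {π : Equiv.Perm ℕ} {m : ℕ} {o : ℕ → ℕ}

lemma cgNext_apply (hC : IsCycleOf n π m o) {t : ℕ} (ht : 1 ≤ t) (htm : t ≤ m) :
    cgNext π (o t) = o (if t = m then 1 else t + 1) := by
  rw [hC.2.2.2.1 t ht htm]
  split_ifs with h
  · rw [h, Nat.mod_self]
  · rw [Nat.mod_eq_of_lt (by omega)]

lemma isCycleListing (hC : IsCycleOf n π m o) {p : ℕ} (hp : 1 ≤ p) (hpm : p ≤ m) :
    IsCycleListing (cgNext π) n (fun t => if t ≤ m then o t else o (t - m)) p (p + m) where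
  lt := by omega
  mem t ht := by
    simp only [Set.mem_Ico] at ht
    split_ifs
    · exact hC.2.1 t (by omega) (by omega)
    · exact hC.2.1 (t - m) (by omega) (by omega)
  injOn s hs t ht hst := by
    simp only [Set.mem_Ico] at hs ht
    dsimp only at hst
    split_ifs at hst
    all_goals have := hC.2.2.1 _ _ (by omega) (by omega) (by omega) (by omega) hst
    all_goals omega
  step t hpt htm := by
    split_ifs <;> first
      | omega
      | rw [hC.cgNext_apply (by omega) (by omega)]; congr 1; split_ifs <;> omega
  close := by
    split_ifs <;> first
      | omega
      | rw [hC.cgNext_apply (by omega) (by omega)]; congr 1; split_ifs <;> omega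

lemma codd_applyTransp (hπ : IsExtPerm n π) (hC : IsCycleOf n π m o) {p q r : ℕ} (hp : 1 ≤ p)
    (hpq : p < q) (hqr : q < r) (hrm : r ≤ m) (hop : o r < o p) (hor : o q < o r) :
    codd n (applyTransp π (o q) (o r) (o p)) + m % 2 =
      codd n π + ((q - p) % 2 + (r - q) % 2 + (m + p - r) % 2) := by
  have hL := hC.isCycleListing hp (by omega)
  have h := hL.coddAux_threeCycle_comp hπ.cgNext_bijOn hpq hqr (by omega)
  simp only [if_pos hrm, if_pos (hqr.trans_le hrm).le, if_pos ((hpq.trans hqr).le.trans hrm),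
    show p + m - p = m by omega, show p + m - r = m + p - r by omega] at h
  rw [hπ.codd_applyTransp (hC.2.1 q (by omega) (by omega)).1 hor hop
    (hC.2.1 p hp (by omega)).2, codd]
  exact h

lemma validOrientedTriple_iff (hπ : IsExtPerm n π) (hC : IsCycleOf n π m o) (hOdd : m % 2 = 1)
    {p q r : ℕ} (hp : 1 ≤ p) (hpq : p < q) (hqr : q < r) (hrm : r ≤ m) (hop : o r < o p)
    (hor : o q < o r) :
    ValidOrientedTriple n π (o p) (o q) (o r) ↔ (q - p) % 2 = 1 ∧ (r - q) % 2 = 1 := by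
  have hcodd := hC.codd_applyTransp hπ hp hpq hqr hrm hop hor
  have hq_mem := hC.2.1 q (by omega) (by omega)
  have hp_mem := hC.2.1 p hp (by omega)
  simp only [ValidOrientedTriple, IsTwoTransposition]
  constructor
  · rintro (⟨-, -, -, -, -, -, h⟩ | ⟨h, -⟩ | ⟨-, h, -⟩) <;> omega
  · rintro ⟨h₁, h₂⟩
    exact Or.inl ⟨hop, hor, hq_mem.1, hor, hop, hp_mem.2, by omega⟩

end IsCycleOf

/-- If an odd cycle `C = (o_1, …, o_m)` of the cycle graph `G(π)` contains
a valid oriented triple `(o_i, o_j, o_k)`, with positions `i < j < k` and `o_i > o_k > o_j`,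
then `C` contains a valid oriented triple `(o_{i'}, o_{j'}, o_{k'})`, with positions
`i' < j' < k'`, such that `i' ∈ {1, 2}` or `k' = j' + 1`. -/
theorem odd_cycle_valid_triple_case_one
    (n : ℕ) (π : Equiv.Perm ℕ) (hπ : IsExtPerm n π)
    (m : ℕ) (o : ℕ → ℕ) (hC : IsCycleOf n π m o) (hOdd : m % 2 = 1)
    (i j k : ℕ) (hi : 1 ≤ i) (hij : i < j) (hjk : j < k) (hk : k ≤ m)
    (hpat : o i > o k ∧ o k > o j)
    (hvalid : ValidOrientedTriple n π (o i) (o j) (o k)) :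
    ∃ i' j' k' : ℕ, 1 ≤ i' ∧ i' < j' ∧ j' < k' ∧ k' ≤ m ∧
      (i' = 1 ∨ i' = 2 ∨ k' = j' + 1) ∧
      ValidOrientedTriple n π (o i') (o j') (o k') := by
  obtain ⟨hoi, hok⟩ := hpat
  have valid : ∀ {p q r}, 1 ≤ p → p < q → q < r → r ≤ m → o r < o p → o q < o r →
      (q - p) % 2 = 1 → (r - q) % 2 = 1 → ValidOrientedTriple n π (o p) (o q) (o r) :=
    fun hp hpq hqr hrm hop hor h₁ h₂ =>
      (hC.validOrientedTriple_iff hπ hOdd hp hpq hqr hrm hop hor).2 ⟨h₁, h₂⟩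
  have hne : ∀ {s t}, 1 ≤ s → s < t → t ≤ m → o s ≠ o t := fun hs hst ht h => by
    have := hC.2.2.1 _ _ hs (by omega) (by omega) ht h
    omega
  have htop : ∀ {t}, 2 ≤ t → t ≤ m → o t < o 1 := hC.2.2.2.2 _
  by_cases hshort : i ≤ 2 ∨ k = j + 1
  · exact ⟨i, j, k, hi, hij, hjk, hk, by omega, hvalid⟩
  obtain ⟨hji, hkj⟩ := (hC.validOrientedTriple_iff hπ hOdd hi hij hjk hk hoi hok).1 hvalid
  by_cases hi_odd : i % 2 = 1
  · exact ⟨1, j, k, le_rfl, by omega, hjk, hk, by omega,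
      valid le_rfl (by omega) hjk hk (htop (by omega) hk) hok (by omega) hkj⟩
  -- now `i ≥ 4` is even, so `j` is odd and `k` is even
  rcases (hne (s := 2) (by omega) (by omega) hk).lt_or_gt with h2k | h2k
  · rcases (hne (s := k - 1) (by omega) (by omega) hk).lt_or_gt with hk1 | hk1
    · exact ⟨i, k - 1, k, hi, by omega, by omega, hk, by omega,
        valid hi (by omega) (by omega) hk hoi hk1 (by omega) (by omega)⟩
    · exact ⟨1, 2, k - 1, le_rfl, by omega, by omega, by omega, by omega,
        valid le_rfl (by omega) (by omega) (by omega) (htop (by omega) (by omega)) (h2k.trans hk1)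
          (by omega) (by omega)⟩
  · exact ⟨2, j, k, by omega, by omega, hjk, hk, by omega,
      valid (by omega) (by omega) hjk hk h2k hok (by omega) hkj⟩
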